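/- (Proposed decomposition for a pair of multi-controlled rotations, Fig. 5.) Fix n ≥ 2 and real angles θ₁, θ₂. Work with complex matrices over the index type ((Fin (n−1) → Fin 2) × Fin 2) × Fin 2, whose components record the n−1 'bundle' qubits q₁,…,q_{n−1}, the qubit q_n, and the target qubit. Define the following gates: Λ_all(R_y(φ)) applies R_y(φ) to the target exactly when all of q₁,…,q_{n−1} and q_n are 1; Λ_b(R_y(φ)) applies R_y(φ) to the target exactly when all bundle qubits q₁,…,q_{n−1} are 1 (regardless of q_n); C_n(R_y(φ)) applies R_y(φ) to the target exactly when q_n = 1; Λ_b(X_{q_n}) applies NOT to q_n exactly when all bundle qubits are 1; and X_{q_n} applies NOT to q_n unconditionally. Then the composition (applied in time order) [Λ_all(R_y(θ₁)); X_{q_n}; Λ_all(R_y(θ₂))] equals the composition (applied in time order) [C_n(R_y(θ₁/2)); X_{q_n}; C_n(R_y(θ₂/2)); Λ_b(X_{q_n}); C_n(R_y(−θ₂/2)); X_{q_n}; C_n(R_y(−θ₁/2)); Λ_b(X_{q_n}); Λ_b(R_y((θ₁+θ₂)/2)); X_{q_n}]. -/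
import Mathlib


open Matrix

/-- `R_y(θ)`: the 2×2 rotation matrix `[[cos θ, −sin θ], [sin θ, cos θ]]` viewed over `ℂ`. -/
noncomputable def Ry (θ : ℝ) : Matrix (Fin 2) (Fin 2) ℂ :=
  !![(Real.cos θ : ℂ), -(Real.sin θ : ℂ); (Real.sin θ : ℂ), (Real.cos θ : ℂ)]

/-- Index type for a register of `m` bundle qubits `q₁,…,q_m`, the qubit `q_{m+1}`,
and a target qubit. -/
abbrev QIdx (m : ℕ) := ((Fin m → Fin 2) × Fin 2) × Fin 2

/-- `Λ_all(R_y(φ))`: applies `R_y(φ)` to the target exactly when all bundle qubits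
and `q_n` are `1`. -/
noncomputable def LamAll (m : ℕ) (φ : ℝ) : Matrix (QIdx m) (QIdx m) ℂ :=
  Matrix.of fun x y =>
    if x.1 = y.1 then
      (if (∀ i, y.1.1 i = 1) ∧ y.1.2 = 1 then Ry φ x.2 y.2 else if x.2 = y.2 then 1 else 0)
    else 0

/-- `Λ_b(R_y(φ))`: applies `R_y(φ)` to the target exactly when all bundle qubits
are `1` (regardless of `q_n`). -/
noncomputable def LamB (m : ℕ) (φ : ℝ) : Matrix (QIdx m) (QIdx m) ℂ :=
  Matrix.of fun x y =>
    if x.1 = y.1 then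
      (if ∀ i, y.1.1 i = 1 then Ry φ x.2 y.2 else if x.2 = y.2 then 1 else 0)
    else 0

/-- `C_n(R_y(φ))`: applies `R_y(φ)` to the target exactly when `q_n = 1`. -/
noncomputable def Cn (m : ℕ) (φ : ℝ) : Matrix (QIdx m) (QIdx m) ℂ :=
  Matrix.of fun x y =>
    if x.1 = y.1 then
      (if y.1.2 = 1 then Ry φ x.2 y.2 else if x.2 = y.2 then 1 else 0)
    else 0

/-- `Λ_b(X_{q_n})`: applies NOT to `q_n` exactly when all bundle qubits are `1`;
it maps `e_{((x,c),b)}` to `e_{((x, c ⊕ [∀ i, x i = 1]), b)}`. -/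
def LamBX (m : ℕ) : Matrix (QIdx m) (QIdx m) ℂ :=
  Matrix.of fun x y =>
    if x = ((y.1.1, if ∀ i, y.1.1 i = 1 then y.1.2 + 1 else y.1.2), y.2) then 1 else 0

/-- `X_{q_n}`: applies NOT to `q_n` unconditionally. -/
def Xqn (m : ℕ) : Matrix (QIdx m) (QIdx m) ℂ :=
  Matrix.of fun x y => if x = ((y.1.1, y.1.2 + 1), y.2) then 1 else 0

lemma Ry_mul (a b : ℝ) : Ry a * Ry b = Ry (a + b) := by
  ext i j
  fin_cases i <;> fin_cases j <;>
    simp [Ry, Matrix.mul_apply, Fin.sum_univ_succ, Real.cos_add, Real.sin_add] <;> ring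

lemma Ry_zero : Ry 0 = 1 := by
  ext i j
  fin_cases i <;> fin_cases j <;> simp [Ry, Matrix.one_apply]

noncomputable def Dg (A B : Matrix (Fin 2) (Fin 2) ℂ) : Matrix (Fin 2 × Fin 2) (Fin 2 × Fin 2) ℂ :=
  Matrix.of fun x y => if x.1 = y.1 then (if y.1 = 1 then B x.2 y.2 else A x.2 y.2) else 0

def XK : Matrix (Fin 2 × Fin 2) (Fin 2 × Fin 2) ℂ :=
  Matrix.of fun x y => if x = (y.1 + 1, y.2) then 1 else 0

lemma Dg_one : Dg 1 1 = 1 := by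
  ext ⟨c, i⟩ ⟨d, j⟩
  by_cases h : c = d <;> simp [Dg, Matrix.one_apply, Prod.ext_iff, h]

lemma Dg_mul_Dg (A B C D : Matrix (Fin 2) (Fin 2) ℂ) :
    Dg A B * Dg C D = Dg (A * C) (B * D) := by
  ext ⟨c, i⟩ ⟨d, j⟩
  fin_cases c <;> fin_cases d <;>
    simp [Dg, Matrix.mul_apply, Fintype.sum_prod_type, Fin.sum_univ_succ]

lemma XK_mul_XK : XK * XK = 1 := by
  ext ⟨c, i⟩ ⟨d, j⟩
  fin_cases c <;> fin_cases d <;> fin_cases i <;> fin_cases j <;>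
    simp [XK, Matrix.mul_apply, Matrix.one_apply, Fintype.sum_prod_type, Fin.sum_univ_succ,
      Prod.ext_iff]

lemma XK_mul_Dg (A B : Matrix (Fin 2) (Fin 2) ℂ) : XK * Dg A B = Dg B A * XK := by
  ext ⟨c, i⟩ ⟨d, j⟩
  fin_cases c <;> fin_cases d <;> fin_cases i <;> fin_cases j <;>
    simp [XK, Dg, Matrix.mul_apply, Fintype.sum_prod_type, Fin.sum_univ_succ, Prod.ext_iff]

def qEquiv (m : ℕ) : QIdx m ≃ (Fin 2 × Fin 2) × (Fin m → Fin 2) where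
  toFun x := ((x.1.2, x.2), x.1.1)
  invFun p := ((p.2, p.1.1), p.1.2)
  left_inv x := rfl
  right_inv p := rfl

noncomputable def lift (m : ℕ) (F : Bool → Matrix (Fin 2 × Fin 2) (Fin 2 × Fin 2) ℂ) :
    Matrix (QIdx m) (QIdx m) ℂ :=
  (Matrix.blockDiagonal fun v => F (decide (∀ i, v i = 1))).submatrix (qEquiv m) (qEquiv m)

lemma lift_mul (m : ℕ) (F G : Bool → Matrix (Fin 2 × Fin 2) (Fin 2 × Fin 2) ℂ) :
    lift m F * lift m G = lift m (fun p => F p * G p) := by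
  unfold lift
  rw [Matrix.submatrix_mul_equiv _ _ _ (qEquiv m) _, Matrix.blockDiagonal_mul]

lemma lift_apply (m : ℕ) (F : Bool → Matrix (Fin 2 × Fin 2) (Fin 2 × Fin 2) ℂ)
    (x y : QIdx m) :
    lift m F x y =
      if x.1.1 = y.1.1 then F (decide (∀ i, y.1.1 i = 1)) (x.1.2, x.2) (y.1.2, y.2) else 0 := by
  rcases x with ⟨⟨v, c⟩, b⟩; rcases y with ⟨⟨w, d⟩, e⟩
  by_cases h : v = w
  · subst h; simp [lift, qEquiv, Matrix.blockDiagonal_apply]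
  · simp [lift, qEquiv, Matrix.blockDiagonal_apply, h]


lemma LamAll_eq (m : ℕ) (φ : ℝ) :
    LamAll m φ = lift m (fun p => if p then Dg 1 (Ry φ) else 1) := by
  ext ⟨⟨v, c⟩, b⟩ ⟨⟨w, d⟩, e⟩
  rw [lift_apply]
  by_cases h : v = w
  · subst h
    by_cases hp : ∀ i, v i = 1 <;>
      simp [LamAll, Dg, Matrix.one_apply, Prod.ext_iff, hp, and_assoc, ite_and]
  · simp [LamAll, Prod.ext_iff, h]

lemma LamB_eq (m : ℕ) (φ : ℝ) :
    LamB m φ = lift m (fun p => if p then Dg (Ry φ) (Ry φ) else 1) := by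
  ext ⟨⟨v, c⟩, b⟩ ⟨⟨w, d⟩, e⟩
  rw [lift_apply]
  by_cases h : v = w
  · subst h
    by_cases hp : ∀ i, v i = 1 <;>
      simp [LamB, Dg, Matrix.one_apply, Prod.ext_iff, hp, ite_and]
  · simp [LamB, Prod.ext_iff, h]

lemma Cn_eq (m : ℕ) (φ : ℝ) : Cn m φ = lift m (fun _ => Dg 1 (Ry φ)) := by
  ext ⟨⟨v, c⟩, b⟩ ⟨⟨w, d⟩, e⟩
  rw [lift_apply]
  by_cases h : v = w
  · subst h
    by_cases hd : d = 1 <;> by_cases hc : c = d <;>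
      simp [Cn, Dg, Matrix.one_apply, Prod.ext_iff, hd, hc, ite_and]
  · simp [Cn, Prod.ext_iff, h]

lemma LamBX_eq (m : ℕ) : LamBX m = lift m (fun p => if p then XK else 1) := by
  ext ⟨⟨v, c⟩, b⟩ ⟨⟨w, d⟩, e⟩
  rw [lift_apply]
  by_cases h : v = w
  · subst h
    by_cases hp : ∀ i, v i = 1 <;>
      simp [LamBX, XK, Matrix.one_apply, Prod.ext_iff, hp, and_assoc]
  · simp [LamBX, Prod.ext_iff, h]

lemma Xqn_eq (m : ℕ) : Xqn m = lift m (fun _ => XK) := by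
  ext ⟨⟨v, c⟩, b⟩ ⟨⟨w, d⟩, e⟩
  rw [lift_apply]
  by_cases h : v = w
  · subst h; simp [Xqn, XK, Prod.ext_iff, and_assoc]
  · simp [Xqn, Prod.ext_iff, h]

lemma XK_mul_Dg' (A B : Matrix (Fin 2) (Fin 2) ℂ) (M : Matrix (Fin 2 × Fin 2) (Fin 2 × Fin 2) ℂ) :
    XK * (Dg A B * M) = Dg B A * (XK * M) := by
  rw [← mul_assoc, XK_mul_Dg, mul_assoc]

lemma XK_mul_XK' (M : Matrix (Fin 2 × Fin 2) (Fin 2 × Fin 2) ℂ) : XK * (XK * M) = M := by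
  rw [← mul_assoc, XK_mul_XK, one_mul]

lemma Dg_mul_Dg' (A B C D : Matrix (Fin 2) (Fin 2) ℂ)
    (M : Matrix (Fin 2 × Fin 2) (Fin 2 × Fin 2) ℂ) :
    Dg A B * (Dg C D * M) = Dg (A * C) (B * D) * M := by
  rw [← mul_assoc, Dg_mul_Dg]

/-- Proposed decomposition for a pair of multi-controlled rotations (Fig. 5 of the
paper), on `n` qubits (`n−1` bundle qubits plus `q_n`) and a target qubit.  The
gate sequence applied in time order `[Λ_all(R_y(θ₁)); X_{q_n}; Λ_all(R_y(θ₂))]`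
equals the sequence applied in time order
`[C_n(R_y(θ₁/2)); X_{q_n}; C_n(R_y(θ₂/2)); Λ_b(X_{q_n}); C_n(R_y(−θ₂/2)); X_{q_n};
  C_n(R_y(−θ₁/2)); Λ_b(X_{q_n}); Λ_b(R_y((θ₁+θ₂)/2)); X_{q_n}]`
(in the matrix products below the leftmost gate of each time-ordered list is the
rightmost factor). -/
theorem pair_of_rotations_decomposition (n : ℕ) (hn : 2 ≤ n) (θ₁ θ₂ : ℝ) :
    LamAll (n - 1) θ₂ * Xqn (n - 1) * LamAll (n - 1) θ₁ =
      Xqn (n - 1) * LamB (n - 1) ((θ₁ + θ₂) / 2) * LamBX (n - 1) *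
        Cn (n - 1) (-θ₁ / 2) * Xqn (n - 1) * Cn (n - 1) (-θ₂ / 2) *
        LamBX (n - 1) * Cn (n - 1) (θ₂ / 2) * Xqn (n - 1) * Cn (n - 1) (θ₁ / 2) := by
  simp only [LamAll_eq, LamB_eq, LamBX_eq, Cn_eq, Xqn_eq]
  simp only [lift_mul]
  refine congrArg _ (funext fun p => ?_)
  cases p
  · simp only [Bool.false_eq_true, if_false]
    simp only [mul_assoc, one_mul, mul_one, XK_mul_Dg', XK_mul_Dg, XK_mul_XK', XK_mul_XK,
      Dg_mul_Dg', Dg_mul_Dg, Ry_mul]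
    rw [show -θ₁ / 2 + θ₁ / 2 = 0 by ring, show -θ₂ / 2 + θ₂ / 2 = 0 by ring, Ry_zero,
      Dg_one, one_mul]
  · simp only [if_true]
    simp only [mul_assoc, one_mul, mul_one, XK_mul_Dg', XK_mul_Dg, XK_mul_XK', XK_mul_XK,
      Dg_mul_Dg', Dg_mul_Dg, Ry_mul]
    rw [show (θ₁ + θ₂) / 2 + -θ₂ / 2 + θ₁ / 2 = θ₁ by ring,
      show (θ₁ + θ₂) / 2 + -θ₁ / 2 + θ₂ / 2 = θ₂ by ring]
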